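/- arXiv:2210.03594 — 2 statements merged into one kernel-verified Lean document; each statement's English description precedes it below -/
import Mathlib

section
/- (Error difference inequality, interior neighborhoods.) Let f* satisfy the LPA stationarity condition. Then for every k with 1 ≤ k ≤ l−1: C_in(k)·(E_in(k) − E_out(k−1)) + μ Σ_{i∈N_k} |f*_i − y_i| ≤ C_out(k)·(E_in(k+1) − E_out(k)) + s_k + μ|N_k|·α_k, where E_in, E_out are evaluated at f = f* (and E_out(0) = 0 since f* = y on labeled points). -/
/-! At an unlabelled point `i` the stationarity condition writes `(Wᵢ + μ)(f*ᵢ − yᵢ)` as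
`∑ⱼ wᵢⱼ(f*ⱼ − yⱼ) + ∑ⱼ wᵢⱼ(yⱼ − yᵢ) + μ(hᵢ − yᵢ)`, where `Wᵢ = ∑ⱼ wᵢⱼ`, so by the triangle
inequality `(Wᵢ + μ)|f*ᵢ − yᵢ|` is bounded by the same sums of absolute values. Summing over
`N_k`, whose points are adjacent only to points of `N_{k−1}`, `N_k` and `N_{k+1}`, the edges
inside `N_k` contribute equally to both sides by symmetry of `w`; what remains compares the
error flows across the two boundaries of `N_k`. -/

open Finset

/-- The graph on the data points: an edge between distinct `i, j` iff the weight is positive. -/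
def graphOf {N : ℕ} (w : Fin N → Fin N → ℝ) : SimpleGraph (Fin N) where
  Adj i j := i ≠ j ∧ 0 < w i j ∧ 0 < w j i
  symm := ⟨fun _ _ h => ⟨h.1.symm, h.2.2, h.2.1⟩⟩
  loopless := ⟨fun _ h => h.1 rfl⟩

/-- Hop distance from `i` to the set `L = {0, …, n−1}` of labeled points
(`⊤` if `i` is not reachable from any labeled point). -/
noncomputable def hopDist {N : ℕ} (w : Fin N → Fin N → ℝ) (n : ℕ) (i : Fin N) : ℕ∞ :=
  ⨅ v ∈ {v : Fin N | (v : ℕ) < n}, (graphOf w).edist i v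

open scoped Classical in
/-- `N_k`: the set of points at hop distance exactly `k` from the labeled set. -/
noncomputable def Nbhd {N : ℕ} (w : Fin N → Fin N → ℝ) (n k : ℕ) : Finset (Fin N) :=
  Finset.univ.filter fun i => hopDist w n i = (k : ℕ∞)

/-- In-flow `C_in(k) = ∑_{i∈N_k, j∈N_{k−1}} wᵢⱼ`. -/
noncomputable def Cin {N : ℕ} (w : Fin N → Fin N → ℝ) (n k : ℕ) : ℝ :=
  ∑ i ∈ Nbhd w n k, ∑ j ∈ Nbhd w n (k - 1), w i j

/-- Out-flow `C_out(k) = ∑_{i∈N_k, j∈N_{k+1}} wᵢⱼ`. -/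
noncomputable def Cout {N : ℕ} (w : Fin N → Fin N → ℝ) (n k : ℕ) : ℝ :=
  ∑ i ∈ Nbhd w n k, ∑ j ∈ Nbhd w n (k + 1), w i j

/-- In-error `E_in(k) = (∑_{i∈N_k, j∈N_{k−1}} wᵢⱼ|fᵢ − yᵢ|) / C_in(k)`. -/
noncomputable def Ein {N : ℕ} (w : Fin N → Fin N → ℝ) (n : ℕ) (y f : Fin N → ℝ) (k : ℕ) : ℝ :=
  (∑ i ∈ Nbhd w n k, ∑ j ∈ Nbhd w n (k - 1), w i j * |f i - y i|) / Cin w n k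

/-- Out-error `E_out(k) = (∑_{i∈N_k, j∈N_{k+1}} wᵢⱼ|fᵢ − yᵢ|) / C_out(k)`. -/
noncomputable def Eout {N : ℕ} (w : Fin N → Fin N → ℝ) (n : ℕ) (y f : Fin N → ℝ) (k : ℕ) : ℝ :=
  (∑ i ∈ Nbhd w n k, ∑ j ∈ Nbhd w n (k + 1), w i j * |f i - y i|) / Cout w n k

/-- Smoothness `s_k = ∑_{i∈N_k} ∑_j wᵢⱼ|yⱼ − yᵢ|`. -/
noncomputable def smoothnessOf {N : ℕ} (w : Fin N → Fin N → ℝ) (n : ℕ) (y : Fin N → ℝ)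
    (k : ℕ) : ℝ :=
  ∑ i ∈ Nbhd w n k, ∑ j : Fin N, w i j * |y j - y i|

/-- Prior information error `α_k = (∑_{i∈N_k} |hᵢ − yᵢ|) / |N_k|`. -/
noncomputable def priorErr {N : ℕ} (w : Fin N → Fin N → ℝ) (n : ℕ) (y h : Fin N → ℝ)
    (k : ℕ) : ℝ :=
  (∑ i ∈ Nbhd w n k, |h i - y i|) / (Nbhd w n k).card

/-- Average error `E_k = (∑_{i∈N_k} |fᵢ − yᵢ|) / |N_k|`. -/
noncomputable def avgErr {N : ℕ} (w : Fin N → Fin N → ℝ) (n : ℕ) (y f : Fin N → ℝ)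
    (k : ℕ) : ℝ :=
  (∑ i ∈ Nbhd w n k, |f i - y i|) / (Nbhd w n k).card

section WeightedAverage

variable {ι : Type*}

lemma sum_mul_eq_zero_of_sum_eq_zero {s : Finset ι} {v : ι → ℝ} (g : ι → ℝ)
    (hv : ∀ i ∈ s, 0 ≤ v i) (h : ∑ i ∈ s, v i = 0) : ∑ i ∈ s, v i * g i = 0 :=
  sum_eq_zero fun i hi => by rw [(sum_eq_zero_iff_of_nonneg hv).mp h i hi, zero_mul]

/-- Division by a vanishing total weight is harmless: the weighted sum then vanishes too. -/
lemma sum_sum_mul_div_sum_sum_cancel {v : ι → ι → ℝ} (hv : ∀ i j, 0 ≤ v i j)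
    (s t : Finset ι) (g : ι → ℝ) :
    (∑ i ∈ s, ∑ j ∈ t, v i j) * ((∑ i ∈ s, ∑ j ∈ t, v i j * g i) / ∑ i ∈ s, ∑ j ∈ t, v i j)
      = ∑ i ∈ s, ∑ j ∈ t, v i j * g i :=
  mul_div_cancel_of_imp' fun h => by
    rw [← sum_product'] at h ⊢
    exact sum_mul_eq_zero_of_sum_eq_zero (fun x => g x.1) (fun x _ => hv x.1 x.2) h

lemma sum_sum_mul_swap {v : ι → ι → ℝ} (hv : ∀ i j, v i j = v j i) (s t : Finset ι)
    (g : ι → ℝ) :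
    ∑ i ∈ s, ∑ j ∈ t, v i j * g i = ∑ i ∈ t, ∑ j ∈ s, v i j * g j := by
  rw [sum_comm]
  simp only [hv]

lemma mul_abs_sub_le_of_eq_weighted_avg [Fintype ι] {v f y : ι → ℝ} {x t p μ : ℝ}
    (hv : ∀ j, 0 ≤ v j) (hμ : 0 ≤ μ)
    (hx : x = ((∑ j, v j * f j) + μ * p) / ((∑ j, v j) + μ)) :
    ((∑ j, v j) + μ) * |x - t|
      ≤ (∑ j, v j * |f j - y j|) + (∑ j, v j * |y j - t|) + μ * |p - t| := by
  have hV : 0 ≤ ∑ j, v j := sum_nonneg fun j _ => hv j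
  have hmul : ((∑ j, v j) + μ) * x = (∑ j, v j * f j) + μ * p := by
    rw [hx]
    refine mul_div_cancel_of_imp' fun h => ?_
    have hVμ : ∑ j, v j = 0 ∧ μ = 0 := ⟨by linarith, by linarith⟩
    rw [sum_mul_eq_zero_of_sum_eq_zero f (fun j _ => hv j) hVμ.1, hVμ.2]
    ring
  have hdecomp : ((∑ j, v j) + μ) * (x - t)
      = (∑ j, v j * (f j - y j)) + (∑ j, v j * (y j - t)) + μ * (p - t) := by
    simp only [mul_sub, sum_sub_distrib, ← sum_mul]
    linear_combination hmul
  calc ((∑ j, v j) + μ) * |x - t|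
      = |(∑ j, v j * (f j - y j)) + (∑ j, v j * (y j - t)) + μ * (p - t)| := by
        rw [← hdecomp, abs_mul, abs_of_nonneg (add_nonneg hV hμ)]
    _ ≤ |∑ j, v j * (f j - y j)| + |∑ j, v j * (y j - t)| + |μ * (p - t)| :=
        (abs_add_le _ _).trans (add_le_add_left (abs_add_le _ _) _)
    _ ≤ (∑ j, |v j * (f j - y j)|) + (∑ j, |v j * (y j - t)|) + |μ * (p - t)| := by
        gcongr <;> exact abs_sum_le_sum_abs _ _
    _ = (∑ j, v j * |f j - y j|) + (∑ j, v j * |y j - t|) + μ * |p - t| := by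
        simp only [abs_mul, abs_of_nonneg (hv _), abs_of_nonneg hμ]

end WeightedAverage

section Layers

variable {N n : ℕ} {w : Fin N → Fin N → ℝ} {i j : Fin N} {k : ℕ}

lemma mem_Nbhd_iff : i ∈ Nbhd w n k ↔ hopDist w n i = k := by
  simp [Nbhd]

lemma hopDist_eq_zero_of_lt (hi : (i : ℕ) < n) : hopDist w n i = 0 :=
  nonpos_iff_eq_zero.mp ((iInf₂_le i hi).trans_eq SimpleGraph.edist_self)

lemma le_of_mem_Nbhd (hk : 0 < k) (hi : i ∈ Nbhd w n k) : n ≤ (i : ℕ) := by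
  by_contra! hin
  rw [mem_Nbhd_iff, hopDist_eq_zero_of_lt hin] at hi
  exact hk.ne (mod_cast hi)

lemma hopDist_le_add_one_of_adj (hij : (graphOf w).Adj i j) :
    hopDist w n j ≤ hopDist w n i + 1 :=
  tsub_le_iff_right.mp <| le_iInf₂ fun v hv => tsub_le_iff_right.mpr <|
    calc hopDist w n j ≤ (graphOf w).edist j v := iInf₂_le v hv
      _ ≤ (graphOf w).edist j i + (graphOf w).edist i v := SimpleGraph.edist_triangle
      _ = (graphOf w).edist i v + 1 := by
        rw [SimpleGraph.edist_eq_one_iff_adj.mpr hij.symm, add_comm]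

lemma mem_Nbhd_of_adj (hi : i ∈ Nbhd w n k) (hij : (graphOf w).Adj i j) :
    j ∈ Nbhd w n (k - 1) ∨ j ∈ Nbhd w n k ∨ j ∈ Nbhd w n (k + 1) := by
  simp only [mem_Nbhd_iff] at hi ⊢
  have hj_le := hopDist_le_add_one_of_adj (n := n) hij
  have hi_le := hopDist_le_add_one_of_adj (n := n) hij.symm
  rw [hi] at hj_le hi_le
  obtain ⟨m, hm⟩ := ENat.ne_top_iff_exists.mp (ne_top_of_le_ne_top (by simp) hj_le)
  rw [← hm] at hj_le hi_le ⊢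
  norm_cast at hj_le hi_le ⊢
  omega

lemma Nbhd_disjoint {a b : ℕ} (hab : a ≠ b) : Disjoint (Nbhd w n a) (Nbhd w n b) :=
  disjoint_left.mpr fun _ ha hb =>
    hab (by rw [mem_Nbhd_iff] at ha hb; exact_mod_cast ha.symm.trans hb)

lemma adj_of_pos (hw_symm : ∀ i j, w i j = w j i) (hij : i ≠ j) (hpos : 0 < w i j) :
    (graphOf w).Adj i j :=
  ⟨hij, hpos, hw_symm i j ▸ hpos⟩

lemma sum_mul_eq_sum_adjacent_Nbhd (hw_symm : ∀ i j, w i j = w j i)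
    (hw_nonneg : ∀ i j, 0 ≤ w i j) (hk : 0 < k) (hi : i ∈ Nbhd w n k) (g : Fin N → ℝ) :
    ∑ j, w i j * g j
      = (∑ j ∈ Nbhd w n (k - 1), w i j * g j) + (∑ j ∈ Nbhd w n k, w i j * g j)
        + (∑ j ∈ Nbhd w n (k + 1), w i j * g j) := by
  rw [← sum_union (Nbhd_disjoint (by omega)),
    ← sum_union (disjoint_union_left.mpr ⟨Nbhd_disjoint (by omega), Nbhd_disjoint (by omega)⟩)]
  refine (sum_subset (subset_univ _) fun j _ hj => ?_).symm
  suffices w i j = 0 by rw [this, zero_mul]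
  by_contra hw
  have hij : i ≠ j := by
    rintro rfl
    exact hj (mem_union_left _ (mem_union_right _ hi))
  have hadj := adj_of_pos hw_symm hij ((hw_nonneg i j).lt_of_ne' hw)
  rcases mem_Nbhd_of_adj hi hadj with h | h | h <;> simp [h] at hj

lemma Cout_eq_Cin_succ (hw_symm : ∀ i j, w i j = w j i) (k : ℕ) :
    Cout w n k = Cin w n (k + 1) := by
  rw [Cout, Cin, Nat.add_sub_cancel, sum_comm]
  simp only [hw_symm]

end Layers

section Errors

variable {N n : ℕ} {w : Fin N → Fin N → ℝ} (y : Fin N → ℝ) {f : Fin N → ℝ} {k : ℕ}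

lemma Cin_mul_Ein (hw_nonneg : ∀ i j, 0 ≤ w i j) :
    Cin w n k * Ein w n y f k
      = ∑ i ∈ Nbhd w n k, ∑ j ∈ Nbhd w n (k - 1), w i j * |f i - y i| :=
  sum_sum_mul_div_sum_sum_cancel hw_nonneg _ _ _

lemma Cout_mul_Eout (hw_nonneg : ∀ i j, 0 ≤ w i j) :
    Cout w n k * Eout w n y f k
      = ∑ i ∈ Nbhd w n k, ∑ j ∈ Nbhd w n (k + 1), w i j * |f i - y i| :=
  sum_sum_mul_div_sum_sum_cancel hw_nonneg _ _ _

lemma Cin_mul_Eout_pred (hw_symm : ∀ i j, w i j = w j i) (hw_nonneg : ∀ i j, 0 ≤ w i j)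
    (hk : 0 < k) :
    Cin w n k * Eout w n y f (k - 1)
      = ∑ i ∈ Nbhd w n k, ∑ j ∈ Nbhd w n (k - 1), w i j * |f j - y j| := by
  obtain ⟨m, rfl⟩ : ∃ m, k = m + 1 := ⟨k - 1, by omega⟩
  rw [Nat.add_sub_cancel, ← Cout_eq_Cin_succ hw_symm, Cout_mul_Eout y hw_nonneg,
    sum_sum_mul_swap hw_symm]

lemma Cout_mul_Ein_succ (hw_symm : ∀ i j, w i j = w j i) (hw_nonneg : ∀ i j, 0 ≤ w i j) :
    Cout w n k * Ein w n y f (k + 1)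
      = ∑ i ∈ Nbhd w n k, ∑ j ∈ Nbhd w n (k + 1), w i j * |f j - y j| := by
  rw [Cout_eq_Cin_succ hw_symm, Cin_mul_Ein y hw_nonneg, Nat.add_sub_cancel,
    sum_sum_mul_swap hw_symm]

lemma card_mul_priorErr (h : Fin N → ℝ) :
    ((Nbhd w n k).card : ℝ) * priorErr w n y h k = ∑ i ∈ Nbhd w n k, |h i - y i| :=
  mul_div_cancel_of_imp' fun hcard => by simp_all

lemma sum_Nbhd_error_le (hw_symm : ∀ i j, w i j = w j i) (hw_nonneg : ∀ i j, 0 ≤ w i j)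
    (h : Fin N → ℝ) {μ : ℝ} (hμ : 0 ≤ μ)
    (hstat : ∀ i : Fin N, n ≤ (i : ℕ) →
      f i = ((∑ j, w i j * f j) + μ * h i) / ((∑ j, w i j) + μ))
    (hk : 0 < k) :
    (∑ i ∈ Nbhd w n k, ∑ j ∈ Nbhd w n (k - 1), w i j * |f i - y i|)
        + (∑ i ∈ Nbhd w n k, ∑ j ∈ Nbhd w n (k + 1), w i j * |f i - y i|)
        + μ * ∑ i ∈ Nbhd w n k, |f i - y i|
      ≤ (∑ i ∈ Nbhd w n k, ∑ j ∈ Nbhd w n (k - 1), w i j * |f j - y j|)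
        + (∑ i ∈ Nbhd w n k, ∑ j ∈ Nbhd w n (k + 1), w i j * |f j - y j|)
        + smoothnessOf w n y k + μ * ∑ i ∈ Nbhd w n k, |h i - y i| := by
  have hsplit (g : Fin N → Fin N → ℝ) : ∑ i ∈ Nbhd w n k, ∑ j, w i j * g i j
      = (∑ i ∈ Nbhd w n k, ∑ j ∈ Nbhd w n (k - 1), w i j * g i j)
        + (∑ i ∈ Nbhd w n k, ∑ j ∈ Nbhd w n k, w i j * g i j)
        + (∑ i ∈ Nbhd w n k, ∑ j ∈ Nbhd w n (k + 1), w i j * g i j) := by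
    rw [← sum_add_distrib, ← sum_add_distrib]
    exact sum_congr rfl fun i hi => sum_mul_eq_sum_adjacent_Nbhd hw_symm hw_nonneg hk hi (g i)
  have hpointwise := sum_le_sum fun i (hi : i ∈ Nbhd w n k) =>
    mul_abs_sub_le_of_eq_weighted_avg (y := y) (t := y i) (hw_nonneg i) hμ
      (hstat i (le_of_mem_Nbhd hk hi))
  simp only [add_mul, sum_mul, sum_add_distrib, ← mul_sum] at hpointwise
  rw [hsplit fun i _ => |f i - y i|, hsplit fun _ j => |f j - y j|,
    sum_sum_mul_swap hw_symm (Nbhd w n k) (Nbhd w n k)] at hpointwise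
  rw [smoothnessOf]
  linarith

end Errors

theorem error_difference_inequality_interior_general
    {N n : ℕ}
    (w : Fin N → Fin N → ℝ)
    (hw_symm : ∀ i j, w i j = w j i)
    (hw_nonneg : ∀ i j, 0 ≤ w i j)
    (y h : Fin N → ℝ)
    (μ : ℝ) (hμ : 0 ≤ μ)
    (fstar : Fin N → ℝ)
    (hstat : ∀ i : Fin N, n ≤ (i : ℕ) →
      fstar i = ((∑ j, w i j * fstar j) + μ * h i) / ((∑ j, w i j) + μ))
    (k : ℕ) (hk1 : 1 ≤ k) :
    Cin w n k * (Ein w n y fstar k - Eout w n y fstar (k - 1))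
        + μ * ∑ i ∈ Nbhd w n k, |fstar i - y i|
      ≤ Cout w n k * (Ein w n y fstar (k + 1) - Eout w n y fstar k)
        + smoothnessOf w n y k + μ * (Nbhd w n k).card * priorErr w n y h k := by
  rw [mul_sub, mul_sub, Cin_mul_Ein y hw_nonneg, Cin_mul_Eout_pred y hw_symm hw_nonneg hk1,
    Cout_mul_Ein_succ y hw_symm hw_nonneg, Cout_mul_Eout y hw_nonneg, mul_assoc,
    card_mul_priorErr]
  linarith [sum_Nbhd_error_le y hw_symm hw_nonneg h hμ hstat hk1]

/-- (Error difference inequality, interior neighborhoods.) If `f*` satisfies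
the LPA stationarity condition, then for every `1 ≤ k ≤ l − 1`:
`C_in(k)(E_in(k) − E_out(k−1)) + μ ∑_{i∈N_k}|f*ᵢ − yᵢ|
  ≤ C_out(k)(E_in(k+1) − E_out(k)) + s_k + μ|N_k|α_k`. -/
theorem error_difference_inequality_interior
    {N n : ℕ} (hn : 0 < n) (hnN : n ≤ N)
    (w : Fin N → Fin N → ℝ)
    (hw_symm : ∀ i j, w i j = w j i)
    (hw_nonneg : ∀ i j, 0 ≤ w i j)
    (y h : Fin N → ℝ)
    (hy : ∀ i, y i ∈ Set.Icc (0 : ℝ) 1)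
    (hh : ∀ i, h i ∈ Set.Icc (0 : ℝ) 1)
    (μ : ℝ) (hμ : 0 ≤ μ)
    (fstar : Fin N → ℝ)
    (hconstr : ∀ i : Fin N, (i : ℕ) < n → fstar i = y i)
    (hstat : ∀ i : Fin N, n ≤ (i : ℕ) →
      fstar i = ((∑ j, w i j * fstar j) + μ * h i) / ((∑ j, w i j) + μ))
    (l : ℕ)
    (hne : ∀ k, k ≤ l → (Nbhd w n k).Nonempty)
    (hmax : ∀ k, l < k → Nbhd w n k = ∅)
    (k : ℕ) (hk1 : 1 ≤ k) (hk2 : k + 1 ≤ l) :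
    Cin w n k * (Ein w n y fstar k - Eout w n y fstar (k - 1))
        + μ * ∑ i ∈ Nbhd w n k, |fstar i - y i|
      ≤ Cout w n k * (Ein w n y fstar (k + 1) - Eout w n y fstar k)
        + smoothnessOf w n y k + μ * (Nbhd w n k).card * priorErr w n y h k :=
  error_difference_inequality_interior_general w hw_symm hw_nonneg y h μ hμ fstar hstat k hk1
end

section
/- (Dongle-node reduction identity.) Let w' be the augmented symmetric weight matrix on N + 2K nodes defined by: w'_{ij} = w_{ij} for i, j ≤ N; for i ≤ N and 1 ≤ j ≤ K, w'_{i, N+j} = w'_{N+j, i} = α_j(x_i) if h_j(x_i) = 0 and 0 otherwise, and w'_{i, N+K+j} = w'_{N+K+j, i} = α_j(x_i) if h_j(x_i) = 1 and 0 otherwise; all remaining entries of w' are 0. Then for every f ∈ ℝ^{N+2K} satisfying the dongle constraints f_{N+j} = 0 and f_{N+K+j} = 1 for all 1 ≤ j ≤ K: Σ_{i=1}^{N+2K} Σ_{j=1}^{N+2K} w'_{ij}(f_i − f_j)² = Σ_{i=1}^{N} Σ_{j=1}^{N} w_{ij}(f_i − f_j)² + 2·Σ_{i=1}^{N} Σ_{j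 : h_j(x_i) ≠ ∅} α_j(x_i)·(f_i − h_j(x_i))². Consequently, minimizing the left-hand quadratic form over f subject to the dongle constraints and f_i = y_i for i ≤ n agrees with minimizing Σ_{i,j=1}^N w_{ij}(f_i − f_j)² + 2Σ_i Σ_j α_j(x_i)(f_i − h_j(x_i))² subject to f_i = y_i for i ≤ n. -/
open Finset

/-- The augmented ("dongle") weight matrix: nodes are the `N` data points (`Sum.inl i`),
the `K` class-0 dongle nodes (`Sum.inr (Sum.inl j)`, representing prediction `0` of weak
labeler `j`), and the `K` class-1 dongle nodes (`Sum.inr (Sum.inr j)`, representing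
prediction `1` of weak labeler `j`). Data point `i` is connected to the class-`c` dongle of
labeler `j` with weight `αⱼ(xᵢ)` exactly when `hⱼ(xᵢ) = c`; abstentions (`none`) produce no
edges, and all other entries are `0`. -/
noncomputable def wAug {N K : ℕ} (w : Fin N → Fin N → ℝ)
    (h : Fin K → Fin N → Option ℝ) (α : Fin K → Fin N → ℝ) :
    (Fin N ⊕ (Fin K ⊕ Fin K)) → (Fin N ⊕ (Fin K ⊕ Fin K)) → ℝ
  | Sum.inl i, Sum.inl j => w i j
  | Sum.inl i, Sum.inr (Sum.inl j) => if h j i = some 0 then α j i else 0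
  | Sum.inr (Sum.inl j), Sum.inl i => if h j i = some 0 then α j i else 0
  | Sum.inl i, Sum.inr (Sum.inr j) => if h j i = some 1 then α j i else 0
  | Sum.inr (Sum.inr j), Sum.inl i => if h j i = some 1 then α j i else 0
  | _, _ => 0

/-- The quadratic form `∑_{u,v} w'_{uv}(f_u − f_v)²` on the augmented graph. -/
noncomputable def augQuad {N K : ℕ} (w : Fin N → Fin N → ℝ)
    (h : Fin K → Fin N → Option ℝ) (α : Fin K → Fin N → ℝ)
    (f : (Fin N ⊕ (Fin K ⊕ Fin K)) → ℝ) : ℝ :=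
  ∑ u, ∑ v, wAug w h α u v * (f u - f v) ^ 2

/-- The reduced objective
`∑ᵢ∑ⱼ wᵢⱼ(fᵢ − fⱼ)² + 2∑ᵢ∑_{j : hⱼ(xᵢ) ≠ ∅} αⱼ(xᵢ)(fᵢ − hⱼ(xᵢ))²`. -/
noncomputable def reducedObj {N K : ℕ} (w : Fin N → Fin N → ℝ)
    (h : Fin K → Fin N → Option ℝ) (α : Fin K → Fin N → ℝ)
    (f : (Fin N ⊕ (Fin K ⊕ Fin K)) → ℝ) : ℝ :=
  (∑ i : Fin N, ∑ j : Fin N, w i j * (f (Sum.inl i) - f (Sum.inl j)) ^ 2)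
    + 2 * ∑ i : Fin N, ∑ j ∈ Finset.univ.filter (fun j : Fin K => (h j i).isSome),
        α j i * (f (Sum.inl i) - (h j i).getD 0) ^ 2

/-- The dongle constraints: `f` equals `0` on class-0 dongle nodes and `1` on class-1
dongle nodes. -/
def DongleConstraints {N K : ℕ} (f : (Fin N ⊕ (Fin K ⊕ Fin K)) → ℝ) : Prop :=
  (∀ j : Fin K, f (Sum.inr (Sum.inl j)) = 0) ∧ (∀ j : Fin K, f (Sum.inr (Sum.inr j)) = 1)

/-- (Dongle-node reduction identity.) For every `f` satisfying the dongle
constraints, the augmented quadratic form equals the reduced objective; consequently,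
minimizing the augmented quadratic form subject to the dongle constraints and `fᵢ = yᵢ`
for `i ≤ n` agrees with minimizing the reduced objective under the same constraints. -/
theorem dongle_reduction
    {N n K : ℕ} (hnN : n ≤ N)
    (w : Fin N → Fin N → ℝ)
    (hw_symm : ∀ i j, w i j = w j i)
    (hw_nonneg : ∀ i j, 0 ≤ w i j)
    (y : Fin N → ℝ)
    (hy : ∀ i, y i ∈ Set.Icc (0 : ℝ) 1)
    (h : Fin K → Fin N → Option ℝ)
    (hh : ∀ j i, h j i = none ∨ h j i = some 0 ∨ h j i = some 1)
    (α : Fin K → Fin N → ℝ)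
    (hα : ∀ j i, 0 ≤ α j i) :
    (∀ f : (Fin N ⊕ (Fin K ⊕ Fin K)) → ℝ, DongleConstraints f →
      augQuad w h α f = reducedObj w h α f)
    ∧ (∀ f : (Fin N ⊕ (Fin K ⊕ Fin K)) → ℝ, DongleConstraints f →
        (∀ i : Fin N, (i : ℕ) < n → f (Sum.inl i) = y i) →
        ((∀ g : (Fin N ⊕ (Fin K ⊕ Fin K)) → ℝ, DongleConstraints g →
            (∀ i : Fin N, (i : ℕ) < n → g (Sum.inl i) = y i) →
            augQuad w h α f ≤ augQuad w h α g)
          ↔ (∀ g : (Fin N ⊕ (Fin K ⊕ Fin K)) → ℝ, DongleConstraints g →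
              (∀ i : Fin N, (i : ℕ) < n → g (Sum.inl i) = y i) →
              reducedObj w h α f ≤ reducedObj w h α g))) := by
  have key : ∀ f : (Fin N ⊕ (Fin K ⊕ Fin K)) → ℝ, DongleConstraints f →
      augQuad w h α f = reducedObj w h α f := by
    rintro f ⟨h0, h1⟩
    unfold augQuad reducedObj
    simp only [Fintype.sum_sum_type]
    simp only [wAug, h0, h1, sub_zero, zero_mul, Finset.sum_const_zero, add_zero, mul_zero]
    have inner : ∀ i : Fin N,
        (∑ j : Fin K, (if h j i = some 0 then α j i else 0) * f (Sum.inl i) ^ 2)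
          + (∑ j : Fin K, (if h j i = some 1 then α j i else 0) * (f (Sum.inl i) - 1) ^ 2)
        = ∑ j ∈ Finset.univ.filter (fun j : Fin K => (h j i).isSome),
            α j i * (f (Sum.inl i) - (h j i).getD 0) ^ 2 := by
      intro i
      rw [Finset.sum_filter, ← Finset.sum_add_distrib]
      refine Finset.sum_congr rfl fun j _ => ?_
      rcases hh j i with hj | hj | hj <;> simp [hj]
    have inner' : ∀ i : Fin N,
        (∑ j : Fin K, (if h j i = some 0 then α j i else 0) * (0 - f (Sum.inl i)) ^ 2)
          + (∑ j : Fin K, (if h j i = some 1 then α j i else 0) * (1 - f (Sum.inl i)) ^ 2)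
        = ∑ j ∈ Finset.univ.filter (fun j : Fin K => (h j i).isSome),
            α j i * (f (Sum.inl i) - (h j i).getD 0) ^ 2 := by
      intro i
      rw [← inner i]
      congr 1 <;> refine Finset.sum_congr rfl fun j _ => ?_ <;> ring_nf
    calc _ = (∑ i : Fin N, ∑ j : Fin N, w i j * (f (Sum.inl i) - f (Sum.inl j)) ^ 2)
          + (∑ i : Fin N, ((∑ j : Fin K, (if h j i = some 0 then α j i else 0) * f (Sum.inl i) ^ 2)
              + (∑ j : Fin K, (if h j i = some 1 then α j i else 0) * (f (Sum.inl i) - 1) ^ 2)))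
          + (∑ i : Fin N, ((∑ j : Fin K, (if h j i = some 0 then α j i else 0) * (0 - f (Sum.inl i)) ^ 2)
              + (∑ j : Fin K, (if h j i = some 1 then α j i else 0) * (1 - f (Sum.inl i)) ^ 2))) := by
            have swap0 : (∑ j : Fin K, ∑ i : Fin N,
                (if h j i = some 0 then α j i else 0) * (0 - f (Sum.inl i)) ^ 2)
                = ∑ i : Fin N, ∑ j : Fin K,
                    (if h j i = some 0 then α j i else 0) * (0 - f (Sum.inl i)) ^ 2 :=
              Finset.sum_comm
            have swap1 : (∑ j : Fin K, ∑ i : Fin N,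
                (if h j i = some 1 then α j i else 0) * (1 - f (Sum.inl i)) ^ 2)
                = ∑ i : Fin N, ∑ j : Fin K,
                    (if h j i = some 1 then α j i else 0) * (1 - f (Sum.inl i)) ^ 2 :=
              Finset.sum_comm
            rw [swap0, swap1]
            simp [Finset.sum_add_distrib]
      _ = _ := by
            simp only [inner, inner', two_mul]
            ring
  refine ⟨key, fun f hf hfy => ?_⟩
  constructor <;> intro H g hg hgy <;> have := H g hg hgy
  · rwa [key f hf, key g hg] at this
  · rwa [← key f hf, ← key g hg] at this
end
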